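/- Let n, m ≥ 0 be natural numbers, L one of the logics tΣ_n[m] or tΠ_n[m], τ a finite relational vocabulary, and τ̱ = τ ∪ {P} for a new unary predicate P. Then for every L formula φ(x̄₁,x̄₂) over τ̱, there exists an L reduction sequence D(x̄₁,x̄₂) over τ (i.e., consisting of formulae of the same class tΣ_n[m], resp. tΠ_n[m]) that is a Feferman–Vaught decomposition of φ(x̄₁,x̄₂) over the annotated disjoint union operation. -/

import Mathlib

namespace FV

open Cardinal

/-- A (finite) relational vocabulary: a type of relation symbols with arities. -/
structure Vocab : Type 1 where
  Rel : Type
  arity : Rel → ℕ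

/-- A structure over a relational vocabulary. -/
structure Struc (τ : Vocab) : Type 1 where
  carrier : Type
  rel : ∀ R : τ.Rel, (Fin (τ.arity R) → carrier) → Prop

/-- Infinitary formulae in negation normal form over a relational vocabulary,
with free variables among `Fin n`. -/
inductive Formula (τ : Vocab) : ℕ → Type 1 where
  | tru {n : ℕ} : Formula τ n
  | fls {n : ℕ} : Formula τ n
  | rel {n : ℕ} (R : τ.Rel) (ts : Fin (τ.arity R) → Fin n) : Formula τ n
  | nrel {n : ℕ} (R : τ.Rel) (ts : Fin (τ.arity R) → Fin n) : Formula τ n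
  | eq {n : ℕ} (i j : Fin n) : Formula τ n
  | neq {n : ℕ} (i j : Fin n) : Formula τ n
  | iAnd {n : ℕ} (I : Type) (f : I → Formula τ n) : Formula τ n
  | iOr {n : ℕ} (I : Type) (f : I → Formula τ n) : Formula τ n
  | ex {n : ℕ} (φ : Formula τ (n+1)) : Formula τ n
  | all {n : ℕ} (φ : Formula τ (n+1)) : Formula τ n

/-- Binary conjunction (a conjunction of arity 2). -/
def Formula.and {τ : Vocab} {n : ℕ} (φ ψ : Formula τ n) : Formula τ n :=
  Formula.iAnd Bool (fun b => if b then φ else ψ)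

/-- Binary disjunction (a disjunction of arity 2). -/
def Formula.or {τ : Vocab} {n : ℕ} (φ ψ : Formula τ n) : Formula τ n :=
  Formula.iOr Bool (fun b => if b then φ else ψ)

/-- Quantifier-free formulae (in NNF, with finite conjunctions/disjunctions). -/
inductive IsQF {τ : Vocab} : ∀ {n : ℕ}, Formula τ n → Prop where
  | tru {n : ℕ} : IsQF (Formula.tru (τ := τ) (n := n))
  | fls {n : ℕ} : IsQF (Formula.fls (τ := τ) (n := n))
  | rel {n : ℕ} (R : τ.Rel) (ts : Fin (τ.arity R) → Fin n) : IsQF (Formula.rel R ts)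
  | nrel {n : ℕ} (R : τ.Rel) (ts : Fin (τ.arity R) → Fin n) : IsQF (Formula.nrel R ts)
  | eq {n : ℕ} (i j : Fin n) : IsQF (Formula.eq (τ := τ) i j)
  | neq {n : ℕ} (i j : Fin n) : IsQF (Formula.neq (τ := τ) i j)
  | iAnd {n : ℕ} (I : Type) (hI : Finite I) (f : I → Formula τ n)
      (h : ∀ i, IsQF (f i)) : IsQF (Formula.iAnd I f)
  | iOr {n : ℕ} (I : Type) (hI : Finite I) (f : I → Formula τ n)
      (h : ∀ i, IsQF (f i)) : IsQF (Formula.iOr I f)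

/-- Satisfaction of a formula in a structure under an assignment. -/
def Sat {τ : Vocab} (A : Struc τ) : ∀ {n : ℕ}, Formula τ n → (Fin n → A.carrier) → Prop
  | _, .tru, _ => True
  | _, .fls, _ => False
  | _, .rel R ts, v => A.rel R (fun i => v (ts i))
  | _, .nrel R ts, v => ¬ A.rel R (fun i => v (ts i))
  | _, .eq i j, v => v i = v j
  | _, .neq i j, v => v i ≠ v j
  | _, .iAnd I f, v => ∀ i : I, Sat A (f i) v
  | _, .iOr I f, v => ∃ i : I, Sat A (f i) v
  | _, .ex φ, v => ∃ a, Sat A φ (Fin.snoc v a)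
  | _, .all φ, v => ∀ a, Sat A φ (Fin.snoc v a)

/-- The empty assignment. -/
def emptyA {α : Type} : Fin 0 → α := fun i => i.elim0

/-- The (quantifier) rank of a formula: the supremum of the number of quantifiers
on any root-to-leaf path of its parse tree. -/
noncomputable def rank {τ : Vocab} : ∀ {n : ℕ}, Formula τ n → Cardinal
  | _, .iAnd I f => ⨆ i : I, rank (f i)
  | _, .iOr I f => ⨆ i : I, rank (f i)
  | _, .ex φ => rank φ + 1
  | _, .all φ => rank φ + 1
  | _, _ => 0

/-- The size of a formula (number of nodes of its parse tree), as a cardinal. -/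
noncomputable def sizeC {τ : Vocab} : ∀ {n : ℕ}, Formula τ n → Cardinal
  | _, .iAnd I f => 1 + Cardinal.sum (fun i : I => sizeC (f i))
  | _, .iOr I f => 1 + Cardinal.sum (fun i : I => sizeC (f i))
  | _, .ex φ => 1 + sizeC φ
  | _, .all φ => 1 + sizeC φ
  | _, _ => 1

mutual
/-- The class tΣ_{κ,λ} of formulae. -/
inductive TSigma (τ : Vocab) (κ : Cardinal) : Ordinal → ∀ {n : ℕ}, Formula τ n → Prop where
  | qf {n : ℕ} {φ : Formula τ n} : IsQF φ → TSigma τ κ 0 φ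
  | conj {n : ℕ} {lam : Ordinal} (I : Type) (f : I → Formula τ n)
      (hI : Cardinal.mk I < κ) (lam' : I → Ordinal) (hlt : ∀ i, lam' i < lam)
      (h : ∀ i, TPi τ κ (lam' i) (f i)) : TSigma τ κ lam (Formula.iAnd I f)
  | ex {n : ℕ} {lam : Ordinal} {φ : Formula τ (n+1)} :
      TSigma τ κ lam φ → TSigma τ κ lam (Formula.ex φ)

/-- The class tΠ_{κ,λ} of formulae. -/
inductive TPi (τ : Vocab) (κ : Cardinal) : Ordinal → ∀ {n : ℕ}, Formula τ n → Prop where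
  | qf {n : ℕ} {φ : Formula τ n} : IsQF φ → TPi τ κ 0 φ
  | disj {n : ℕ} {lam : Ordinal} (I : Type) (f : I → Formula τ n)
      (hI : Cardinal.mk I < κ) (lam' : I → Ordinal) (hlt : ∀ i, lam' i < lam)
      (h : ∀ i, TSigma τ κ (lam' i) (f i)) : TPi τ κ lam (Formula.iOr I f)
  | all {n : ℕ} {lam : Ordinal} {φ : Formula τ (n+1)} :
      TPi τ κ lam φ → TPi τ κ lam (Formula.all φ)
end

/-- tΣ_{∞,λ}: union of tΣ_{κ,λ} over all infinite cardinals κ. -/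
def TSigmaInf (τ : Vocab) (lam : Ordinal) {n : ℕ} (φ : Formula τ n) : Prop :=
  ∃ κ : Cardinal, ℵ₀ ≤ κ ∧ TSigma τ κ lam φ

/-- tΠ_{∞,λ}: union of tΠ_{κ,λ} over all infinite cardinals κ. -/
def TPiInf (τ : Vocab) (lam : Ordinal) {n : ℕ} (φ : Formula τ n) : Prop :=
  ∃ κ : Cardinal, ℵ₀ ≤ κ ∧ TPi τ κ lam φ

/-- The λ-fold exponential `tower` function (taking suprema at limits). -/
noncomputable def towerC (κ : Cardinal) (l : Ordinal) : Cardinal :=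
  Ordinal.limitRecOn l κ (fun _ ih => (2 : Cardinal) ^ ih)
    (fun o _ ih => ⨆ i : {o' : Ordinal // o' < o}, ih i.1 i.2)

/-- The n-fold exponential `tower` function on naturals. -/
def towerN : ℕ → Cardinal → Cardinal
  | 0, k => k
  | n+1, k => (2 : Cardinal) ^ towerN n k

open Classical in
/-- ρ(κ,λ) = tower(λ,κ) if κ > ω, else ω. -/
noncomputable def rho (κ : Cardinal) (lam : Ordinal) : Cardinal :=
  if ℵ₀ < κ then towerC κ lam else ℵ₀

/-- ∞-propositional formulae over a set `V` of propositional variables. -/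
inductive PropForm (V : Type) : Type 1 where
  | var (v : V) : PropForm V
  | not (p : PropForm V) : PropForm V
  | iAnd (I : Type) (f : I → PropForm V) : PropForm V
  | iOr (I : Type) (f : I → PropForm V) : PropForm V

/-- Binary conjunction of propositional formulae. -/
def PropForm.and {V : Type} (p q : PropForm V) : PropForm V :=
  PropForm.iAnd Bool (fun b => if b then p else q)

/-- Binary disjunction of propositional formulae. -/
def PropForm.or {V : Type} (p q : PropForm V) : PropForm V :=
  PropForm.iOr Bool (fun b => if b then p else q)

/-- Evaluation of an ∞-propositional formula under an assignment. -/
def PropForm.eval {V : Type} (ζ : V → Bool) : PropForm V → Prop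
  | .var v => ζ v = true
  | .not p => ¬ PropForm.eval ζ p
  | .iAnd _ f => ∀ i, PropForm.eval ζ (f i)
  | .iOr _ f => ∃ i, PropForm.eval ζ (f i)

/-- Negation-free ∞-propositional formulae. -/
inductive PropForm.NegFree {V : Type} : PropForm V → Prop where
  | var (v : V) : PropForm.NegFree (.var v)
  | iAnd (I : Type) (f : I → PropForm V) (h : ∀ i, PropForm.NegFree (f i)) :
      PropForm.NegFree (.iAnd I f)
  | iOr (I : Type) (f : I → PropForm V) (h : ∀ i, PropForm.NegFree (f i)) :
      PropForm.NegFree (.iOr I f)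

/-- Finitary (ordinary) propositional formulae. -/
inductive PropForm.Finitary {V : Type} : PropForm V → Prop where
  | var (v : V) : PropForm.Finitary (.var v)
  | not (p : PropForm V) (h : PropForm.Finitary p) : PropForm.Finitary (.not p)
  | iAnd (I : Type) (hI : Finite I) (f : I → PropForm V)
      (h : ∀ i, PropForm.Finitary (f i)) : PropForm.Finitary (.iAnd I f)
  | iOr (I : Type) (hI : Finite I) (f : I → PropForm V)
      (h : ∀ i, PropForm.Finitary (f i)) : PropForm.Finitary (.iOr I f)

/-- Size of an ∞-propositional formula. -/
noncomputable def PropForm.size {V : Type} : PropForm V → Cardinal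
  | .var _ => 1
  | .not p => 1 + PropForm.size p
  | .iAnd I f => 1 + Cardinal.sum (fun i : I => PropForm.size (f i))
  | .iOr I f => 1 + Cardinal.sum (fun i : I => PropForm.size (f i))

/-- A reduction sequence `D(x̄₁, x̄₂) = (Δ₁(x̄₁), Δ₂(x̄₂), β)` over τ. -/
structure RedSeq (τ : Vocab) (r₁ r₂ : ℕ) : Type 1 where
  I : Type
  Δ₁ : I → Formula τ r₁
  Δ₂ : I → Formula τ r₂
  β : PropForm (I × Fin 2)

/-- `(A₁, A₂, ā₁, ā₂)` is a model of the reduction sequence `D`. -/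
def RedSeq.Models {τ : Vocab} {r₁ r₂ : ℕ} (D : RedSeq τ r₁ r₂) (A₁ A₂ : Struc τ)
    (a₁ : Fin r₁ → A₁.carrier) (a₂ : Fin r₂ → A₂.carrier) : Prop :=
  ∃ ζ : D.I × Fin 2 → Bool, D.β.eval ζ ∧
    (∀ i : D.I, (ζ (i, 0) = true ↔ Sat A₁ (D.Δ₁ i) a₁)) ∧
    (∀ i : D.I, (ζ (i, 1) = true ↔ Sat A₂ (D.Δ₂ i) a₂))

/-- Size of a reduction sequence. -/
noncomputable def RedSeq.size {τ : Vocab} {r₁ r₂ : ℕ} (D : RedSeq τ r₁ r₂) : Cardinal :=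
  Cardinal.sum (fun i : D.I => sizeC (D.Δ₁ i)) +
    Cardinal.sum (fun i : D.I => sizeC (D.Δ₂ i)) + D.β.size

/-- The vocabulary τ̱ = τ ∪ {P} for a new unary predicate P (represented by `none`). -/
def annotV (τ : Vocab) : Vocab where
  Rel := Option τ.Rel
  arity := fun R => match R with
    | none => 1
    | some S => τ.arity S

/-- The annotated disjoint union of two τ-structures: their disjoint union,
expanded by interpreting the new unary predicate P as the universe of the first. -/
def adu {τ : Vocab} (A₁ A₂ : Struc τ) : Struc (annotV τ) where
  carrier := A₁.carrier ⊕ A₂.carrier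
  rel := fun R => match R with
    | none => fun v => (v ⟨0, Nat.one_pos⟩).isLeft = true
    | some S => fun v =>
        (∃ w : Fin (τ.arity S) → A₁.carrier, A₁.rel S w ∧ v = fun i => Sum.inl (w i)) ∨
        (∃ w : Fin (τ.arity S) → A₂.carrier, A₂.rel S w ∧ v = fun i => Sum.inr (w i))

/-- `D` is a Feferman–Vaught decomposition of `φ(x̄₁,x̄₂)` over annotated disjoint union. -/
def FVDecompADU {τ : Vocab} {r₁ r₂ : ℕ} (φ : Formula (annotV τ) (r₁ + r₂))
    (D : RedSeq τ r₁ r₂) : Prop :=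
  ∀ (A₁ A₂ : Struc τ) (a₁ : Fin r₁ → A₁.carrier) (a₂ : Fin r₂ → A₂.carrier),
    Sat (adu A₁ A₂) φ (Fin.append (fun i => Sum.inl (a₁ i)) (fun i => Sum.inr (a₂ i)))
      ↔ D.Models A₁ A₂ a₁ a₂

/-- `D` is a Feferman–Vaught decomposition of the sentence `φ` over the binary operation `op`. -/
def FVDecompOp {τ : Vocab} (op : Struc τ → Struc τ → Struc τ) (φ : Formula τ 0)
    (D : RedSeq τ 0 0) : Prop :=
  ∀ A₁ A₂ : Struc τ, Sat (op A₁ A₂) φ emptyA ↔ D.Models A₁ A₂ emptyA emptyA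

/-- A quantifier-free scalar (σ,τ)-interpretation. -/
structure QFInterp (σ τ : Vocab) : Type 1 where
  xiU : Formula σ 1
  xiR : ∀ R : τ.Rel, Formula σ (τ.arity R)
  hU : IsQF xiU
  hR : ∀ R : τ.Rel, IsQF (xiR R)

/-- The τ-structure interpreted in a σ-structure by a quantifier-free interpretation. -/
def QFInterp.app {σ τ : Vocab} (Ξ : QFInterp σ τ) (A : Struc σ) : Struc τ where
  carrier := { a : A.carrier // Sat A Ξ.xiU (fun _ => a) }
  rel := fun R v => Sat A (Ξ.xiR R) (fun i => (v i).1)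

/-- The quantifier-free sum-like binary operation defined by a (τ̱,τ)-interpretation. -/
def sumLike {τ : Vocab} (Ξ : QFInterp (annotV τ) τ) (A₁ A₂ : Struc τ) : Struc τ :=
  Ξ.app (adu A₁ A₂)


/-- Relabelling of free variables. -/
def relabel {τ : Vocab} : ∀ {m n : ℕ}, (Fin m → Fin n) → Formula τ m → Formula τ n
  | _, _, _, .tru => .tru
  | _, _, _, .fls => .fls
  | _, _, g, .rel R ts => .rel R (fun i => g (ts i))
  | _, _, g, .nrel R ts => .nrel R (fun i => g (ts i))
  | _, _, g, .eq i j => .eq (g i) (g j)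
  | _, _, g, .neq i j => .neq (g i) (g j)
  | _, _, g, .iAnd I f => .iAnd I (fun i => relabel g (f i))
  | _, _, g, .iOr I f => .iOr I (fun i => relabel g (f i))
  | _, _, g, .ex φ => .ex (relabel (Fin.snoc (fun i => Fin.castSucc (g i)) (Fin.last _)) φ)
  | _, _, g, .all φ => .all (relabel (Fin.snoc (fun i => Fin.castSucc (g i)) (Fin.last _)) φ)

/-- Negation, in negation normal form. -/
def nnfNeg {τ : Vocab} : ∀ {n : ℕ}, Formula τ n → Formula τ n
  | _, .tru => .fls
  | _, .fls => .tru
  | _, .rel R ts => .nrel R ts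
  | _, .nrel R ts => .rel R ts
  | _, .eq i j => .neq i j
  | _, .neq i j => .eq i j
  | _, .iAnd I f => .iOr I (fun i => nnfNeg (f i))
  | _, .iOr I f => .iAnd I (fun i => nnfNeg (f i))
  | _, .ex φ => .all (nnfNeg φ)
  | _, .all φ => .ex (nnfNeg φ)

/-- Finite conjunction of a tuple of formulae. -/
def finAnd {τ : Vocab} {n : ℕ} : ∀ {r : ℕ}, (Fin r → Formula τ n) → Formula τ n
  | 0, _ => .tru
  | r+1, f => (finAnd (fun i => f (Fin.castSucc i))).and (f (Fin.last r))

/-- A block of `k` existential quantifiers. -/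
def exBlock {τ : Vocab} : ∀ (k : ℕ) {r : ℕ}, Formula τ (r + k) → Formula τ r
  | 0, _, φ => φ
  | k+1, _, φ => exBlock k (Formula.ex φ)

/-- A block of `k` universal quantifiers. -/
def allBlock {τ : Vocab} : ∀ (k : ℕ) {r : ℕ}, Formula τ (r + k) → Formula τ r
  | 0, _, φ => φ
  | k+1, _, φ => allBlock k (Formula.all φ)

mutual
/-- The class tΣ_{(n,k)}: tΣ_n formulae all of whose quantifier blocks have length exactly k. -/
inductive SigNK (τ : Vocab) (k : ℕ) : ℕ → ∀ {r : ℕ}, Formula τ r → Prop where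
  | qf {r : ℕ} {φ : Formula τ r} : IsQF φ → SigNK τ k 0 φ
  | blk {r n : ℕ} (hn : 0 < n) (I : Type) (hI : Finite I) (f : I → Formula τ (r + k))
      (n' : I → ℕ) (hlt : ∀ i, n' i < n) (h : ∀ i, PiNK τ k (n' i) (f i)) :
      SigNK τ k n (exBlock k (Formula.iAnd I f))
/-- The class tΠ_{(n,k)}: tΠ_n formulae all of whose quantifier blocks have length exactly k. -/
inductive PiNK (τ : Vocab) (k : ℕ) : ℕ → ∀ {r : ℕ}, Formula τ r → Prop where
  | qf {r : ℕ} {φ : Formula τ r} : IsQF φ → PiNK τ k 0 φ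
  | blk {r n : ℕ} (hn : 0 < n) (I : Type) (hI : Finite I) (f : I → Formula τ (r + k))
      (n' : I → ℕ) (hlt : ∀ i, n' i < n) (h : ∀ i, SigNK τ k (n' i) (f i)) :
      PiNK τ k n (allBlock k (Formula.iOr I f))
end

/-- Partial isomorphism condition on a pair of tuples. -/
def PIso {τ : Vocab} (A₁ A₂ : Struc τ) (r : ℕ)
    (a₁ : Fin r → A₁.carrier) (a₂ : Fin r → A₂.carrier) : Prop :=
  (∀ i j : Fin r, a₁ i = a₁ j ↔ a₂ i = a₂ j) ∧
  (∀ (R : τ.Rel) (ts : Fin (τ.arity R) → Fin r),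
      A₁.rel R (fun l => a₁ (ts l)) ↔ A₂.rel R (fun l => a₂ (ts l)))

/-- The Duplicator has a winning strategy in the (n,k)-prefix game on the ordered pair
((A₁,ā₁),(A₂,ā₂)): in odd rounds the Spoiler picks a k-tuple in A₁ (and the Duplicator
answers in A₂), in even rounds the roles of the structures are swapped; the Duplicator wins
a play if the chosen tuples collectively form a partial isomorphism. -/
def DWinPrefix {τ : Vocab} (k : ℕ) : ℕ → (A₁ A₂ : Struc τ) → (r : ℕ) →
    (Fin r → A₁.carrier) → (Fin r → A₂.carrier) → Prop
  | 0, A₁, A₂, r, a₁, a₂ => PIso A₁ A₂ r a₁ a₂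
  | n+1, A₁, A₂, r, a₁, a₂ =>
      ∀ b₁ : Fin k → A₁.carrier, ∃ b₂ : Fin k → A₂.carrier,
        DWinPrefix k n A₂ A₁ (r + k) (Fin.append a₂ b₂) (Fin.append a₁ b₁)

/-- The Duplicator has a winning strategy in the (n,k)-tree-prefix game on the set
{(A₁,ā₁),(A₂,ā₂)}: in the first round the Spoiler picks a k-tuple in either structure, and
thereafter in the structure in which the Duplicator chose in the previous round. -/
def DWinTree {τ : Vocab} (k : ℕ) : ℕ → (A₁ A₂ : Struc τ) → (r : ℕ) →
    (Fin r → A₁.carrier) → (Fin r → A₂.carrier) → Prop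
  | 0, A₁, A₂, r, a₁, a₂ => PIso A₁ A₂ r a₁ a₂
  | n+1, A₁, A₂, r, a₁, a₂ =>
      (∀ b₁ : Fin k → A₁.carrier, ∃ b₂ : Fin k → A₂.carrier,
        DWinPrefix k n A₂ A₁ (r + k) (Fin.append a₂ b₂) (Fin.append a₁ b₁)) ∧
      (∀ b₂ : Fin k → A₂.carrier, ∃ b₁ : Fin k → A₁.carrier,
        DWinPrefix k n A₁ A₂ (r + k) (Fin.append a₁ b₁) (Fin.append a₂ b₂))

/-- (A₁,ā₁) ⇛_{(n,k)} (A₂,ā₂) : every tΣ_{(n,k)} formula true of (A₁,ā₁) is true of (A₂,ā₂). -/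
def TransferNK {τ : Vocab} (n k : ℕ) (A₁ A₂ : Struc τ) (r : ℕ)
    (a₁ : Fin r → A₁.carrier) (a₂ : Fin r → A₂.carrier) : Prop :=
  ∀ φ : Formula τ r, SigNK τ k n φ → Sat A₁ φ a₁ → Sat A₂ φ a₂

/-- (A₁,ā₁) ≡_{(n,k)} (A₂,ā₂) : agreement on all tΣ_{(n,k)} formulae. -/
def EquivNK {τ : Vocab} (n k : ℕ) (A₁ A₂ : Struc τ) (r : ℕ)
    (a₁ : Fin r → A₁.carrier) (a₂ : Fin r → A₂.carrier) : Prop :=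
  ∀ φ : Formula τ r, SigNK τ k n φ → (Sat A₁ φ a₁ ↔ Sat A₂ φ a₂)

namespace QFInterp

variable {σ τ : Vocab}

/-- The universe formula ξ_U applied at variable `i`. -/
def uAt (Ξ : QFInterp σ τ) {n : ℕ} (i : Fin n) : Formula σ n :=
  relabel (fun _ : Fin 1 => i) Ξ.xiU

/-- The universe formula ξ_U applied at the last (just-quantified) variable. -/
def uLast (Ξ : QFInterp σ τ) {n : ℕ} : Formula σ (n+1) :=
  Ξ.uAt (Fin.last n)

/-- Close a pending quantifier-block guard. -/
def closeG {n : ℕ} : Option (Bool × Formula σ n) → Formula σ n → Formula σ n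
  | none, r => r
  | some (true, g), r => g.and r
  | some (false, g), r => g.or r

/-- Block-wise translation Ξ(φ) of a formula under a quantifier-free interpretation,
with an accumulator carrying the pending universe-guard of the current quantifier block:
Ξ(R(z̄)) = ξ_R(z̄) ∧ ⋀ᵢ ξ_U(zᵢ); Ξ(¬R(z̄)) = ¬ξ_R(z̄) ∧ ⋀ᵢ ξ_U(zᵢ) (¬ξ_R in NNF);
Ξ commutes with conjunctions and disjunctions; Ξ(∃x̄ ⋀ᵢφᵢ) = ∃x̄(⋀ⱼ ξ_U(xⱼ) ∧ ⋀ᵢΞ(φᵢ));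
Ξ(∀x̄ ⋁ᵢφᵢ) = ∀x̄((⋁ⱼ ¬ξ_U(xⱼ)) ∨ ⋁ᵢΞ(φᵢ)) (¬ξ_U in NNF). -/
def trA (Ξ : QFInterp σ τ) : ∀ {n : ℕ}, Option (Bool × Formula σ n) → Formula τ n → Formula σ n
  | _, mode, .tru => closeG mode .tru
  | _, mode, .fls => closeG mode .fls
  | _, mode, .rel R ts =>
      closeG mode ((relabel ts (Ξ.xiR R)).and (finAnd (fun i => Ξ.uAt (ts i))))
  | _, mode, .nrel R ts =>
      closeG mode ((nnfNeg (relabel ts (Ξ.xiR R))).and (finAnd (fun i => Ξ.uAt (ts i))))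
  | _, mode, .eq i j => closeG mode ((Formula.eq i j).and ((Ξ.uAt i).and (Ξ.uAt j)))
  | _, mode, .neq i j => closeG mode ((Formula.neq i j).and ((Ξ.uAt i).and (Ξ.uAt j)))
  | _, some (true, g), .iAnd I f =>
      .iAnd (Option I) (fun o => o.elim g (fun i => Ξ.trA none (f i)))
  | _, some (false, g), .iOr I f =>
      .iOr (Option I) (fun o => o.elim g (fun i => Ξ.trA none (f i)))
  | _, mode, .iAnd I f => closeG mode (.iAnd I (fun i => Ξ.trA none (f i)))
  | _, mode, .iOr I f => closeG mode (.iOr I (fun i => Ξ.trA none (f i)))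
  | _, some (true, g), .ex φ =>
      .ex (Ξ.trA (some (true, (relabel Fin.castSucc g).and Ξ.uLast)) φ)
  | _, some (false, g), .all φ =>
      .all (Ξ.trA (some (false, (relabel Fin.castSucc g).or (nnfNeg Ξ.uLast))) φ)
  | _, mode, .ex φ => closeG mode (.ex (Ξ.trA (some (true, Ξ.uLast)) φ))
  | _, mode, .all φ => closeG mode (.all (Ξ.trA (some (false, nnfNeg Ξ.uLast)) φ))

/-- The translation Ξ(φ) of a formula. -/
def translate (Ξ : QFInterp σ τ) {n : ℕ} (φ : Formula τ n) : Formula σ n :=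
  Ξ.trA none φ

/-- The size |Ξ| of an interpretation: the sum of the sizes of its formulae. -/
noncomputable def size [Fintype τ.Rel] (Ξ : QFInterp σ τ) : Cardinal :=
  sizeC Ξ.xiU + ∑ R : τ.Rel, sizeC (Ξ.xiR R)

end QFInterp

/-!
Let `g : Fin q → Fin r₁ ⊕ Fin r₂` distribute the free variables of `φ` over the two sides.
By induction on `φ`, over annotated disjoint unions a tΣ_λ formula is equivalent to a finite
disjunction of rectangles `θⱼ(x̄₁) ∧ ηⱼ(x̄₂)`, and a tΠ_λ formula to a finite conjunction of
`θⱼ(x̄₁) ∨ ηⱼ(x̄₂)`, with `θⱼ, ηⱼ` in the same class over τ and of no larger rank. Atoms are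
one-clause CNFs, because a relation of `A₁ ⊍̱ A₂` only holds on tuples inside one side;
`∃x` splits into `x ∈ A₁` or `x ∈ A₂` and is absorbed by that side; a finite conjunction of
CNFs becomes a DNF by distributivity, choosing the true side of every clause, and the sides
stay in tΣ_λ as finite conjunctions of tΠ formulae of lower level. The reduction sequence then
has `β = ⋁ⱼ (Xⱼ₁ ∧ Xⱼ₂)`, resp. `⋀ⱼ (Xⱼ₁ ∨ Xⱼ₂)`.
-/

section Decomposition

universe u

variable {τ : Vocab}

theorem sat_nnfNeg (A : Struc τ) {n : ℕ} (φ : Formula τ n) (v : Fin n → A.carrier) :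
    Sat A (nnfNeg φ) v ↔ ¬ Sat A φ v := by
  induction φ with
  | iAnd I f ih => simp [Sat, nnfNeg, ih, not_forall]
  | iOr I f ih => simp [Sat, nnfNeg, ih]
  | ex φ ih => simp [Sat, nnfNeg, ih]
  | all φ ih => simp [Sat, nnfNeg, ih, not_forall]
  | _ => simp [Sat, nnfNeg]

theorem IsQF.nnfNeg {n : ℕ} {φ : Formula τ n} (h : IsQF φ) : IsQF (nnfNeg φ) := by
  induction h with
  | iAnd I hI f _ ih => exact .iOr I hI _ ih
  | iOr I hI f _ ih => exact .iAnd I hI _ ih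
  | tru => exact .fls
  | fls => exact .tru
  | rel R ts => exact .nrel R ts
  | nrel R ts => exact .rel R ts
  | eq i j => exact .neq i j
  | neq i j => exact .eq i j

theorem rank_iAnd_le_iff {n : ℕ} {I : Type} {f : I → Formula τ n} {c : Cardinal} :
    rank (.iAnd I f) ≤ c ↔ ∀ i, rank (f i) ≤ c :=
  ciSup_le_iff' Cardinal.bddAbove_of_small

theorem rank_iOr_le_iff {n : ℕ} {I : Type} {f : I → Formula τ n} {c : Cardinal} :
    rank (.iOr I f) ≤ c ↔ ∀ i, rank (f i) ≤ c :=
  ciSup_le_iff' Cardinal.bddAbove_of_small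

theorem rank_le_rank_iAnd {n : ℕ} {I : Type} (f : I → Formula τ n) (i : I) :
    rank (f i) ≤ rank (.iAnd I f) :=
  rank_iAnd_le_iff.1 le_rfl i

theorem rank_le_rank_iOr {n : ℕ} {I : Type} (f : I → Formula τ n) (i : I) :
    rank (f i) ≤ rank (.iOr I f) :=
  rank_iOr_le_iff.1 le_rfl i

theorem IsQF.rank_eq_zero {n : ℕ} {φ : Formula τ n} (h : IsQF φ) : rank φ = 0 := by
  induction h with
  | iAnd I _ f _ ih => exact le_antisymm (rank_iAnd_le_iff.2 fun i => (ih i).le) zero_le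
  | iOr I _ f _ ih => exact le_antisymm (rank_iOr_le_iff.2 fun i => (ih i).le) zero_le
  | _ => rfl

theorem Sum.exists_map_comp_eq_inl_iff {K α β γ δ : Type} (f₁ : α → γ) (f₂ : β → δ)
    (v : K → α ⊕ β) (R : (K → γ) → Prop) :
    (∃ w, R w ∧ (fun k => Sum.map f₁ f₂ (v k)) = fun k => .inl (w k)) ↔
      ∃ u : {u : K → α // v = fun k => .inl (u k)}, R (fun k => f₁ (u.1 k)) := by
  constructor
  · rintro ⟨w, hw, hv⟩
    have : ∀ k, ∃ a, v k = .inl a := fun k => by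
      have := congrFun hv k
      cases hk : v k <;> simp_all
    choose u hu using this
    refine ⟨⟨u, funext hu⟩, ?_⟩
    convert hw using 1
    funext k
    simpa [hu] using congrFun hv k
  · rintro ⟨⟨u, rfl⟩, hR⟩
    exact ⟨_, hR, rfl⟩

theorem Sum.exists_map_comp_eq_inr_iff {K α β γ δ : Type} (f₁ : α → γ) (f₂ : β → δ)
    (v : K → α ⊕ β) (R : (K → δ) → Prop) :
    (∃ w, R w ∧ (fun k => Sum.map f₁ f₂ (v k)) = fun k => .inr (w k)) ↔
      ∃ u : {u : K → β // v = fun k => .inr (u k)}, R (fun k => f₂ (u.1 k)) := by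
  constructor
  · rintro ⟨w, hw, hv⟩
    have : ∀ k, ∃ b, v k = .inr b := fun k => by
      have := congrFun hv k
      cases hk : v k <;> simp_all
    choose u hu using this
    refine ⟨⟨u, funext hu⟩, ?_⟩
    convert hw using 1
    funext k
    simpa [hu] using congrFun hv k
  · rintro ⟨⟨u, rfl⟩, hR⟩
    exact ⟨_, hR, rfl⟩

variable {q r₁ r₂ : ℕ}

-- The codomain is `(adu A₁ A₂).carrier`, only semireducibly equal to
-- `A₁.carrier ⊕ A₂.carrier`: generic `Sum` and `Fin.snoc` lemmas do not fire under
-- `Sat (adu A₁ A₂)`, whence the specialised lemmas `exists_adu_carrier`,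
-- `snoc_aduAssign_inl`, ... below.
def aduAssign {A₁ A₂ : Struc τ} (g : Fin q → Fin r₁ ⊕ Fin r₂) (a₁ : Fin r₁ → A₁.carrier)
    (a₂ : Fin r₂ → A₂.carrier) : Fin q → (adu A₁ A₂).carrier :=
  fun i => Sum.map a₁ a₂ (g i)

def IsDnf (g : Fin q → Fin r₁ ⊕ Fin r₂) (φ : Formula (annotV τ) q) {J : Type}
    (θ : J → Formula τ r₁) (η : J → Formula τ r₂) : Prop :=
  ∀ (A₁ A₂ : Struc τ) (a₁ : Fin r₁ → A₁.carrier) (a₂ : Fin r₂ → A₂.carrier),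
    Sat (adu A₁ A₂) φ (aduAssign g a₁ a₂) ↔ ∃ j, Sat A₁ (θ j) a₁ ∧ Sat A₂ (η j) a₂

def IsCnf (g : Fin q → Fin r₁ ⊕ Fin r₂) (φ : Formula (annotV τ) q) {J : Type}
    (θ : J → Formula τ r₁) (η : J → Formula τ r₂) : Prop :=
  ∀ (A₁ A₂ : Struc τ) (a₁ : Fin r₁ → A₁.carrier) (a₂ : Fin r₂ → A₂.carrier),
    Sat (adu A₁ A₂) φ (aduAssign g a₁ a₂) ↔ ∀ j, Sat A₁ (θ j) a₁ ∨ Sat A₂ (η j) a₂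

theorem forall_or_iff_exists_bool {K : Type} {P Q : K → Prop} :
    (∀ k, P k ∨ Q k) ↔ ∃ c : K → Bool, (∀ k, c k = true → P k) ∧ (∀ k, c k = false → Q k) := by
  classical
  constructor
  · intro h
    exact ⟨fun k => decide (P k), fun k hk => of_decide_eq_true hk,
      fun k hk => (h k).resolve_left (of_decide_eq_false hk)⟩
  · rintro ⟨c, hP, hQ⟩ k
    cases hk : c k
    exacts [.inr (hQ k hk), .inl (hP k hk)]

theorem exists_and_iff_forall_bool {K : Type} {P Q : K → Prop} :
    (∃ k, P k ∧ Q k) ↔ ∀ c : K → Bool, (∃ k, c k = true ∧ P k) ∨ (∃ k, c k = false ∧ Q k) := by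
  classical
  constructor
  · rintro ⟨k, hP, hQ⟩ c
    cases hk : c k
    exacts [.inr ⟨k, hk, hQ⟩, .inl ⟨k, hk, hP⟩]
  · intro h
    by_contra! hPQ
    rcases h fun k => decide (¬ P k) with ⟨k, hk, hP⟩ | ⟨k, hk, hQ⟩
    · exact of_decide_eq_true hk hP
    · exact hPQ k (not_not.1 (of_decide_eq_false hk)) hQ

variable {g : Fin q → Fin r₁ ⊕ Fin r₂} {φ : Formula (annotV τ) q} {J : Type}
  {θ : J → Formula τ r₁} {η : J → Formula τ r₂}

theorem IsCnf.nnfNeg (h : IsCnf g φ θ η) :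
    IsDnf g (nnfNeg φ) (fun j => nnfNeg (θ j)) (fun j => nnfNeg (η j)) := by
  intro A₁ A₂ a₁ a₂
  rw [sat_nnfNeg, h A₁ A₂ a₁ a₂]
  simp only [sat_nnfNeg, not_forall, not_or]

theorem IsCnf.isDnf (h : IsCnf g φ θ η) :
    IsDnf g φ (fun c : J → Bool => .iAnd {j // c j = true} fun j => θ j.1)
      (fun c => .iAnd {j // c j = false} fun j => η j.1) := by
  intro A₁ A₂ a₁ a₂
  simp only [h A₁ A₂ a₁ a₂, Sat, Subtype.forall]
  exact forall_or_iff_exists_bool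

theorem IsDnf.isCnf (h : IsDnf g φ θ η) :
    IsCnf g φ (fun c : J → Bool => .iOr {j // c j = true} fun j => θ j.1)
      (fun c => .iOr {j // c j = false} fun j => η j.1) := by
  intro A₁ A₂ a₁ a₂
  simp only [h A₁ A₂ a₁ a₂, Sat, Subtype.exists, exists_prop]
  exact exists_and_iff_forall_bool

theorem IsCnf.iAnd {I : Type} {f : I → Formula (annotV τ) q} {J : I → Type}
    {θ : ∀ i, J i → Formula τ r₁} {η : ∀ i, J i → Formula τ r₂}
    (h : ∀ i, IsCnf g (f i) (θ i) (η i)) :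
    IsCnf g (.iAnd I f) (fun k : Σ i, J i => θ k.1 k.2) (fun k => η k.1 k.2) := by
  intro A₁ A₂ a₁ a₂
  simp only [Sat, Sigma.forall]
  exact forall_congr' fun i => h i A₁ A₂ a₁ a₂

theorem IsDnf.iOr {I : Type} {f : I → Formula (annotV τ) q} {J : I → Type}
    {θ : ∀ i, J i → Formula τ r₁} {η : ∀ i, J i → Formula τ r₂}
    (h : ∀ i, IsDnf g (f i) (θ i) (η i)) :
    IsDnf g (.iOr I f) (fun k : Σ i, J i => θ k.1 k.2) (fun k => η k.1 k.2) := by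
  intro A₁ A₂ a₁ a₂
  simp only [Sat, Sigma.exists]
  exact exists_congr fun i => h i A₁ A₂ a₁ a₂

theorem exists_adu_carrier {A₁ A₂ : Struc τ} {p : (adu A₁ A₂).carrier → Prop} :
    (∃ a, p a) ↔ (∃ b : A₁.carrier, p (.inl b)) ∨ ∃ b : A₂.carrier, p (.inr b) :=
  Sum.exists

theorem forall_adu_carrier {A₁ A₂ : Struc τ} {p : (adu A₁ A₂).carrier → Prop} :
    (∀ a, p a) ↔ (∀ b : A₁.carrier, p (.inl b)) ∧ ∀ b : A₂.carrier, p (.inr b) :=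
  Sum.forall

def snocLeft (g : Fin q → Fin r₁ ⊕ Fin r₂) : Fin (q + 1) → Fin (r₁ + 1) ⊕ Fin r₂ :=
  Fin.snoc (fun i => Sum.map Fin.castSucc id (g i)) (.inl (Fin.last r₁))

def snocRight (g : Fin q → Fin r₁ ⊕ Fin r₂) : Fin (q + 1) → Fin r₁ ⊕ Fin (r₂ + 1) :=
  Fin.snoc (fun i => Sum.map id Fin.castSucc (g i)) (.inr (Fin.last r₂))

theorem snoc_aduAssign_inl {A₁ A₂ : Struc τ} (a₁ : Fin r₁ → A₁.carrier)
    (a₂ : Fin r₂ → A₂.carrier) (b : A₁.carrier) :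
    Fin.snoc (aduAssign g a₁ a₂) (.inl b) = aduAssign (snocLeft g) (Fin.snoc a₁ b) a₂ := by
  funext i
  refine Fin.lastCases ?_ (fun i => ?_) i <;> simp [Fin.snoc, aduAssign, snocLeft] <;> rfl

theorem snoc_aduAssign_inr {A₁ A₂ : Struc τ} (a₁ : Fin r₁ → A₁.carrier)
    (a₂ : Fin r₂ → A₂.carrier) (b : A₂.carrier) :
    Fin.snoc (aduAssign g a₁ a₂) (.inr b) = aduAssign (snocRight g) a₁ (Fin.snoc a₂ b) := by
  funext i
  refine Fin.lastCases ?_ (fun i => ?_) i <;> simp [Fin.snoc, aduAssign, snocRight] <;> rfl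

theorem IsDnf.ex {ψ : Formula (annotV τ) (q + 1)} {J₁ J₂ : Type}
    {θ₁ : J₁ → Formula τ (r₁ + 1)} {η₁ : J₁ → Formula τ r₂}
    {θ₂ : J₂ → Formula τ r₁} {η₂ : J₂ → Formula τ (r₂ + 1)}
    (h₁ : IsDnf (snocLeft g) ψ θ₁ η₁) (h₂ : IsDnf (snocRight g) ψ θ₂ η₂) :
    IsDnf g (.ex ψ) (Sum.elim (fun j => .ex (θ₁ j)) θ₂) (Sum.elim η₁ (fun j => .ex (η₂ j))) := by
  intro A₁ A₂ a₁ a₂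
  simp only [Sat, exists_adu_carrier, snoc_aduAssign_inl, snoc_aduAssign_inr, h₁ _ _ _ a₂,
    h₂ _ _ a₁ _, Sum.exists, Sum.elim_inl, Sum.elim_inr, ← exists_and_right, ← exists_and_left]
  exact or_congr exists_comm exists_comm

theorem IsCnf.all {ψ : Formula (annotV τ) (q + 1)} {J₁ J₂ : Type}
    {θ₁ : J₁ → Formula τ (r₁ + 1)} {η₁ : J₁ → Formula τ r₂}
    {θ₂ : J₂ → Formula τ r₁} {η₂ : J₂ → Formula τ (r₂ + 1)}
    (h₁ : IsCnf (snocLeft g) ψ θ₁ η₁) (h₂ : IsCnf (snocRight g) ψ θ₂ η₂) :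
    IsCnf g (.all ψ) (Sum.elim (fun j => .all (θ₁ j)) θ₂) (Sum.elim η₁ (fun j => .all (η₂ j))) := by
  intro A₁ A₂ a₁ a₂
  simp only [Sat, forall_adu_carrier, snoc_aduAssign_inl, snoc_aduAssign_inr, h₁ _ _ _ a₂,
    h₂ _ _ a₁ _, Sum.forall, Sum.elim_inl, Sum.elim_inr, ← forall_or_right, ← forall_or_left]
  exact and_congr forall_comm forall_comm

def HasDnf (C : ∀ r, Formula τ r → Prop) (g : Fin q → Fin r₁ ⊕ Fin r₂)
    (φ : Formula (annotV τ) q) : Prop :=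
  ∃ (J : Type) (θ : J → Formula τ r₁) (η : J → Formula τ r₂),
    Finite J ∧ (∀ j, C r₁ (θ j) ∧ C r₂ (η j)) ∧ IsDnf g φ θ η

def HasCnf (C : ∀ r, Formula τ r → Prop) (g : Fin q → Fin r₁ ⊕ Fin r₂)
    (φ : Formula (annotV τ) q) : Prop :=
  ∃ (J : Type) (θ : J → Formula τ r₁) (η : J → Formula τ r₂),
    Finite J ∧ (∀ j, C r₁ (θ j) ∧ C r₂ (η j)) ∧ IsCnf g φ θ η

variable {C C' : ∀ r, Formula τ r → Prop}

theorem HasDnf.mono (h : HasDnf C g φ) (hC : ∀ r ψ, C r ψ → C' r ψ) : HasDnf C' g φ :=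
  let ⟨J, _, _, hJ, hθη, hφ⟩ := h
  ⟨J, _, _, hJ, fun j => ⟨hC _ _ (hθη j).1, hC _ _ (hθη j).2⟩, hφ⟩

theorem HasCnf.mono (h : HasCnf C g φ) (hC : ∀ r ψ, C r ψ → C' r ψ) : HasCnf C' g φ :=
  let ⟨J, _, _, hJ, hθη, hφ⟩ := h
  ⟨J, _, _, hJ, fun j => ⟨hC _ _ (hθη j).1, hC _ _ (hθη j).2⟩, hφ⟩

theorem HasCnf.nnfNeg (h : HasCnf C g φ) (hC : ∀ r ψ, C r ψ → C' r (nnfNeg ψ)) :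
    HasDnf C' g (nnfNeg φ) :=
  let ⟨J, _, _, hJ, hθη, hφ⟩ := h
  ⟨J, _, _, hJ, fun j => ⟨hC _ _ (hθη j).1, hC _ _ (hθη j).2⟩, hφ.nnfNeg⟩

theorem HasCnf.hasDnf (h : HasCnf C g φ)
    (hC : ∀ r (K : Type) (ψ : K → Formula τ r), Finite K → (∀ k, C r (ψ k)) → C' r (.iAnd K ψ)) :
    HasDnf C' g φ :=
  let ⟨J, θ, η, _, hθη, hφ⟩ := h
  ⟨J → Bool, fun c => .iAnd {j // c j = true} fun j => θ j.1,
    fun c => .iAnd {j // c j = false} fun j => η j.1, inferInstance,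
    fun _ => ⟨hC _ _ _ inferInstance fun j => (hθη j.1).1,
      hC _ _ _ inferInstance fun j => (hθη j.1).2⟩,
    hφ.isDnf⟩

theorem HasDnf.hasCnf (h : HasDnf C g φ)
    (hC : ∀ r (K : Type) (ψ : K → Formula τ r), Finite K → (∀ k, C r (ψ k)) → C' r (.iOr K ψ)) :
    HasCnf C' g φ :=
  let ⟨J, θ, η, _, hθη, hφ⟩ := h
  ⟨J → Bool, fun c => .iOr {j // c j = true} fun j => θ j.1,
    fun c => .iOr {j // c j = false} fun j => η j.1, inferInstance,
    fun _ => ⟨hC _ _ _ inferInstance fun j => (hθη j.1).1,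
      hC _ _ _ inferInstance fun j => (hθη j.1).2⟩,
    hφ.isCnf⟩

theorem HasCnf.iAnd {I : Type} [Finite I] {f : I → Formula (annotV τ) q}
    (h : ∀ i, HasCnf C g (f i)) : HasCnf C g (.iAnd I f) := by
  choose J θ η hJ hθη hf using h
  exact ⟨Σ i, J i, _, _, inferInstance, fun k => hθη k.1 k.2, IsCnf.iAnd hf⟩

theorem HasDnf.iOr {I : Type} [Finite I] {f : I → Formula (annotV τ) q}
    (h : ∀ i, HasDnf C g (f i)) : HasDnf C g (.iOr I f) := by
  choose J θ η hJ hθη hf using h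
  exact ⟨Σ i, J i, _, _, inferInstance, fun k => hθη k.1 k.2, IsDnf.iOr hf⟩

theorem HasDnf.ex {ψ : Formula (annotV τ) (q + 1)} (h₁ : HasDnf C (snocLeft g) ψ)
    (h₂ : HasDnf C (snocRight g) ψ) (hC : ∀ r ψ, C r ψ → C' r ψ)
    (hex : ∀ r ψ, C (r + 1) ψ → C' r (.ex ψ)) : HasDnf C' g (.ex ψ) :=
  let ⟨J₁, _, _, _, hC₁, hψ₁⟩ := h₁
  let ⟨J₂, _, _, _, hC₂, hψ₂⟩ := h₂
  ⟨J₁ ⊕ J₂, _, _, inferInstance,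
    Sum.rec (fun j => ⟨hex _ _ (hC₁ j).1, hC _ _ (hC₁ j).2⟩)
      (fun j => ⟨hC _ _ (hC₂ j).1, hex _ _ (hC₂ j).2⟩), hψ₁.ex hψ₂⟩

theorem HasCnf.all {ψ : Formula (annotV τ) (q + 1)} (h₁ : HasCnf C (snocLeft g) ψ)
    (h₂ : HasCnf C (snocRight g) ψ) (hC : ∀ r ψ, C r ψ → C' r ψ)
    (hall : ∀ r ψ, C (r + 1) ψ → C' r (.all ψ)) : HasCnf C' g (.all ψ) :=
  let ⟨J₁, _, _, _, hC₁, hψ₁⟩ := h₁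
  let ⟨J₂, _, _, _, hC₂, hψ₂⟩ := h₂
  ⟨J₁ ⊕ J₂, _, _, inferInstance,
    Sum.rec (fun j => ⟨hall _ _ (hC₁ j).1, hC _ _ (hC₁ j).2⟩)
      (fun j => ⟨hC _ _ (hC₂ j).1, hall _ _ (hC₂ j).2⟩), hψ₁.all hψ₂⟩

theorem hasCnf_rel (g : Fin q → Fin r₁ ⊕ Fin r₂) (R : (annotV τ).Rel)
    (ts : Fin ((annotV τ).arity R) → Fin q) : HasCnf (fun _ ψ => IsQF ψ) g (.rel R ts) := by
  cases R with
  | none =>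
    rcases hg : g (ts ⟨0, Nat.one_pos⟩) with x | x
    · exact ⟨Unit, fun _ => .tru, fun _ => .fls, inferInstance, fun _ => ⟨.tru, .fls⟩,
        fun A₁ A₂ a₁ a₂ => by simp [Sat, adu, aduAssign, hg]⟩
    · exact ⟨Unit, fun _ => .fls, fun _ => .fls, inferInstance, fun _ => ⟨.fls, .fls⟩,
        fun A₁ A₂ a₁ a₂ => by simp [Sat, adu, aduAssign, hg]⟩
  | some S =>
    -- `R` holds on a tuple of `adu A₁ A₂` iff the tuple lies in one side and `R` holds there;
    -- each side is a disjunction over the (at most one) way `g` places the arguments in it.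
    refine ⟨Unit,
      fun _ => .iOr {u // (fun k => g (ts k)) = fun k => .inl (u k)} fun u => .rel S u.1,
      fun _ => .iOr {u // (fun k => g (ts k)) = fun k => .inr (u k)} fun u => .rel S u.1,
      inferInstance,
      fun _ => ⟨.iOr _ inferInstance _ fun _ => .rel _ _, .iOr _ inferInstance _ fun _ => .rel _ _⟩,
      fun A₁ A₂ a₁ a₂ => ?_⟩
    simp only [Sat, adu, aduAssign, forall_const]
    exact or_congr (Sum.exists_map_comp_eq_inl_iff _ _ _ _) (Sum.exists_map_comp_eq_inr_iff _ _ _ _)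

theorem hasCnf_eq (g : Fin q → Fin r₁ ⊕ Fin r₂) (i j : Fin q) :
    HasCnf (fun _ ψ => IsQF ψ) g (.eq (τ := annotV τ) i j) := by
  rcases hi : g i with x | x <;> rcases hj : g j with y | y
  · exact ⟨Unit, fun _ => .eq x y, fun _ => .fls, inferInstance, fun _ => ⟨.eq _ _, .fls⟩,
      fun _ _ _ _ => by simp [Sat, adu, aduAssign, hi, hj]⟩
  · exact ⟨Unit, fun _ => .fls, fun _ => .fls, inferInstance, fun _ => ⟨.fls, .fls⟩,
      fun _ _ _ _ => by simp [Sat, adu, aduAssign, hi, hj]⟩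
  · exact ⟨Unit, fun _ => .fls, fun _ => .fls, inferInstance, fun _ => ⟨.fls, .fls⟩,
      fun _ _ _ _ => by simp [Sat, adu, aduAssign, hi, hj]⟩
  · exact ⟨Unit, fun _ => .fls, fun _ => .eq x y, inferInstance, fun _ => ⟨.fls, .eq _ _⟩,
      fun _ _ _ _ => by simp [Sat, adu, aduAssign, hi, hj]⟩

theorem IsQF.hasCnf (h : IsQF φ) : HasCnf (fun _ ψ => IsQF ψ) g φ := by
  induction h with
  | tru => exact ⟨Empty, Empty.elim, Empty.elim, inferInstance, nofun, fun _ _ _ _ => by simp [Sat]⟩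
  | fls => exact ⟨Unit, fun _ => .fls, fun _ => .fls, inferInstance, fun _ => ⟨.fls, .fls⟩,
      fun _ _ _ _ => by simp [Sat]⟩
  | rel R ts => exact hasCnf_rel g R ts
  | nrel R ts =>
    exact ((hasCnf_rel g R ts).nnfNeg fun _ _ => IsQF.nnfNeg).hasCnf fun _ K _ hK => .iOr K hK _
  | eq i j => exact hasCnf_eq g i j
  | neq i j =>
    exact ((hasCnf_eq g i j).nnfNeg fun _ _ => IsQF.nnfNeg).hasCnf fun _ K _ hK => .iOr K hK _
  | iAnd I hI f _ ih => have := hI; exact HasCnf.iAnd ih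
  | iOr I hI f _ ih =>
    have := hI
    exact (HasDnf.iOr fun i => (ih i).hasDnf fun _ K _ hK => .iAnd K hK _).hasCnf
      fun _ K _ hK => .iOr K hK _

theorem IsQF.hasDnf (h : IsQF φ) : HasDnf (fun _ ψ => IsQF ψ) g φ :=
  h.hasCnf.hasDnf fun _ K _ hK => .iAnd K hK _

theorem IsQF.hasDnf_tSigma {κ : Cardinal} (h : IsQF φ) :
    HasDnf (fun _ ψ => TSigma τ κ 0 ψ ∧ rank.{u} ψ ≤ rank.{u} φ) g φ :=
  h.hasDnf.mono fun _ _ hψ => ⟨.qf hψ, hψ.rank_eq_zero ▸ zero_le⟩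

theorem IsQF.hasCnf_tPi {κ : Cardinal} (h : IsQF φ) :
    HasCnf (fun _ ψ => TPi τ κ 0 ψ ∧ rank.{u} ψ ≤ rank.{u} φ) g φ :=
  h.hasCnf.mono fun _ _ hψ => ⟨.qf hψ, hψ.rank_eq_zero ▸ zero_le⟩

theorem hasDnf_iAnd_of_hasCnf_tPi {I : Type} {f : I → Formula (annotV τ) q} {lam : Ordinal}
    {lam' : I → Ordinal} (hI : Cardinal.mk I < ℵ₀) (hlt : ∀ i, lam' i < lam)
    (h : ∀ i, HasCnf (fun _ ψ => TPi τ ℵ₀ (lam' i) ψ ∧ rank.{u} ψ ≤ rank.{u} (f i)) g (f i)) :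
    HasDnf (fun _ ψ => TSigma τ ℵ₀ lam ψ ∧ rank.{u} ψ ≤ rank.{u} (.iAnd I f)) g (.iAnd I f) := by
  have := Cardinal.lt_aleph0_iff_finite.1 hI
  refine (HasCnf.iAnd fun i => (h i).mono
    (C' := fun _ ψ => ∃ i, TPi τ ℵ₀ (lam' i) ψ ∧ rank.{u} ψ ≤ rank.{u} (f i))
    fun _ _ hψ => ⟨i, hψ⟩).hasDnf ?_
  intro r K ψ hK hψ
  choose i hi using hψ
  exact ⟨.conj K ψ (Cardinal.lt_aleph0_of_finite K) _ (fun k => hlt (i k)) fun k => (hi k).1,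
    rank_iAnd_le_iff.2 fun k => (hi k).2.trans (rank_le_rank_iAnd f (i k))⟩

theorem hasCnf_iOr_of_hasDnf_tSigma {I : Type} {f : I → Formula (annotV τ) q} {lam : Ordinal}
    {lam' : I → Ordinal} (hI : Cardinal.mk I < ℵ₀) (hlt : ∀ i, lam' i < lam)
    (h : ∀ i, HasDnf (fun _ ψ => TSigma τ ℵ₀ (lam' i) ψ ∧ rank.{u} ψ ≤ rank.{u} (f i)) g (f i)) :
    HasCnf (fun _ ψ => TPi τ ℵ₀ lam ψ ∧ rank.{u} ψ ≤ rank.{u} (.iOr I f)) g (.iOr I f) := by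
  have := Cardinal.lt_aleph0_iff_finite.1 hI
  refine (HasDnf.iOr fun i => (h i).mono
    (C' := fun _ ψ => ∃ i, TSigma τ ℵ₀ (lam' i) ψ ∧ rank.{u} ψ ≤ rank.{u} (f i))
    fun _ _ hψ => ⟨i, hψ⟩).hasCnf ?_
  intro r K ψ hK hψ
  choose i hi using hψ
  exact ⟨.disj K ψ (Cardinal.lt_aleph0_of_finite K) _ (fun k => hlt (i k)) fun k => (hi k).1,
    rank_iOr_le_iff.2 fun k => (hi k).2.trans (rank_le_rank_iOr f (i k))⟩

theorem hasDnf_of_tSigma_and_hasCnf_of_tPi (φ : Formula (annotV τ) q) (lam : Ordinal)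
    (g : Fin q → Fin r₁ ⊕ Fin r₂) :
    (TSigma (annotV τ) ℵ₀ lam φ →
        HasDnf (fun _ ψ => TSigma τ ℵ₀ lam ψ ∧ rank.{u} ψ ≤ rank.{u} φ) g φ) ∧
      (TPi (annotV τ) ℵ₀ lam φ →
        HasCnf (fun _ ψ => TPi τ ℵ₀ lam ψ ∧ rank.{u} ψ ≤ rank.{u} φ) g φ) := by
  induction φ generalizing lam r₁ r₂ with
  | iAnd I f ih =>
    refine ⟨fun h => ?_, fun h => ?_⟩
    · cases h with
      | qf hq => exact hq.hasDnf_tSigma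
      | conj _ _ hI _ hlt hf =>
        exact hasDnf_iAnd_of_hasCnf_tPi hI hlt fun i => (ih i _ g).2 (hf i)
    · cases h with
      | qf hq => exact hq.hasCnf_tPi
  | iOr I f ih =>
    refine ⟨fun h => ?_, fun h => ?_⟩
    · cases h with
      | qf hq => exact hq.hasDnf_tSigma
    · cases h with
      | qf hq => exact hq.hasCnf_tPi
      | disj _ _ hI _ hlt hf =>
        exact hasCnf_iOr_of_hasDnf_tSigma hI hlt fun i => (ih i _ g).1 (hf i)
  | ex ψ ih =>
    refine ⟨fun h => ?_, fun h => ?_⟩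
    · cases h with
      | qf hq => cases hq
      | ex hψ =>
        exact HasDnf.ex ((ih lam (snocLeft g)).1 hψ) ((ih lam (snocRight g)).1 hψ)
          (fun _ _ h => ⟨h.1, h.2.trans le_self_add⟩) fun _ _ h => ⟨.ex h.1, add_le_add_left h.2 1⟩
    · cases h with
      | qf hq => cases hq
  | all ψ ih =>
    refine ⟨fun h => ?_, fun h => ?_⟩
    · cases h with
      | qf hq => cases hq
    · cases h with
      | qf hq => cases hq
      | all hψ =>
        exact HasCnf.all ((ih lam (snocLeft g)).2 hψ) ((ih lam (snocRight g)).2 hψ)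
          (fun _ _ h => ⟨h.1, h.2.trans le_self_add⟩) fun _ _ h => ⟨.all h.1, add_le_add_left h.2 1⟩
  | _ =>
    exact ⟨fun h => by cases h with | qf hq => exact hq.hasDnf_tSigma,
      fun h => by cases h with | qf hq => exact hq.hasCnf_tPi⟩

end Decomposition

namespace RedSeq

variable {τ : Vocab} {r₁ r₂ : ℕ}

open Classical in
noncomputable def truthAssignment (D : RedSeq τ r₁ r₂) (A₁ A₂ : Struc τ)
    (a₁ : Fin r₁ → A₁.carrier) (a₂ : Fin r₂ → A₂.carrier) : D.I × Fin 2 → Bool :=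
  fun p => ![decide (Sat A₁ (D.Δ₁ p.1) a₁), decide (Sat A₂ (D.Δ₂ p.1) a₂)] p.2

theorem models_iff (D : RedSeq τ r₁ r₂) (A₁ A₂ : Struc τ) (a₁ : Fin r₁ → A₁.carrier)
    (a₂ : Fin r₂ → A₂.carrier) :
    D.Models A₁ A₂ a₁ a₂ ↔ D.β.eval (D.truthAssignment A₁ A₂ a₁ a₂) := by
  refine ⟨fun ⟨ζ, hβ, h₁, h₂⟩ => ?_,
    fun h => ⟨_, h, by simp [truthAssignment], by simp [truthAssignment]⟩⟩
  convert hβ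
  funext ⟨i, k⟩
  fin_cases k
  · exact Bool.eq_iff_iff.2 (by simp [truthAssignment, h₁])
  · exact Bool.eq_iff_iff.2 (by simp [truthAssignment, h₂])

def ofDnf {J : Type} (θ : J → Formula τ r₁) (η : J → Formula τ r₂) : RedSeq τ r₁ r₂ where
  I := J
  Δ₁ := θ
  Δ₂ := η
  β := .iOr J fun j => (PropForm.var (j, 0)).and (.var (j, 1))

def ofCnf {J : Type} (θ : J → Formula τ r₁) (η : J → Formula τ r₂) : RedSeq τ r₁ r₂ where
  I := J
  Δ₁ := θ
  Δ₂ := η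
  β := .iAnd J fun j => (PropForm.var (j, 0)).or (.var (j, 1))

variable {J : Type} (θ : J → Formula τ r₁) (η : J → Formula τ r₂)

theorem models_ofDnf_iff (A₁ A₂ : Struc τ) (a₁ : Fin r₁ → A₁.carrier) (a₂ : Fin r₂ → A₂.carrier) :
    (ofDnf θ η).Models A₁ A₂ a₁ a₂ ↔ ∃ j, Sat A₁ (θ j) a₁ ∧ Sat A₂ (η j) a₂ := by
  simp [models_iff, ofDnf, truthAssignment, PropForm.eval, PropForm.and, Bool.forall_bool, and_comm]

theorem models_ofCnf_iff (A₁ A₂ : Struc τ) (a₁ : Fin r₁ → A₁.carrier) (a₂ : Fin r₂ → A₂.carrier) :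
    (ofCnf θ η).Models A₁ A₂ a₁ a₂ ↔ ∀ j, Sat A₁ (θ j) a₁ ∨ Sat A₂ (η j) a₂ := by
  simp [models_iff, ofCnf, truthAssignment, PropForm.eval, PropForm.or, Bool.exists_bool, or_comm]

theorem finitary_ofDnf [Finite J] : (ofDnf θ η).β.Finitary :=
  .iOr J ‹_› _ fun _ => .iAnd Bool inferInstance _ fun b => by cases b <;> exact .var _

theorem finitary_ofCnf [Finite J] : (ofCnf θ η).β.Finitary :=
  .iAnd J ‹_› _ fun _ => .iOr Bool inferInstance _ fun b => by cases b <;> exact .var _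

end RedSeq

section FefermanVaught

universe u

variable {τ : Vocab} {r₁ r₂ : ℕ} {φ : Formula (annotV τ) (r₁ + r₂)} {J : Type}
  {θ : J → Formula τ r₁} {η : J → Formula τ r₂}

theorem Sum.map_comp_append_inl_inr {α β : Type} (a₁ : Fin r₁ → α) (a₂ : Fin r₂ → β) :
    Sum.map a₁ a₂ ∘ Fin.append .inl .inr =
      Fin.append (fun i => .inl (a₁ i)) (fun i => .inr (a₂ i)) := by
  funext i
  refine Fin.addCases (fun i => ?_) (fun i => ?_) i <;> simp

theorem aduAssign_append {A₁ A₂ : Struc τ} (a₁ : Fin r₁ → A₁.carrier) (a₂ : Fin r₂ → A₂.carrier) :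
    aduAssign (Fin.append .inl .inr) a₁ a₂ =
      Fin.append (fun i => .inl (a₁ i)) (fun i => .inr (a₂ i)) :=
  Sum.map_comp_append_inl_inr a₁ a₂

theorem IsDnf.fvDecompADU (h : IsDnf (Fin.append .inl .inr) φ θ η) :
    FVDecompADU φ (RedSeq.ofDnf θ η) := by
  intro A₁ A₂ a₁ a₂
  rw [RedSeq.models_ofDnf_iff, ← h, aduAssign_append]

theorem IsCnf.fvDecompADU (h : IsCnf (Fin.append .inl .inr) φ θ η) :
    FVDecompADU φ (RedSeq.ofCnf θ η) := by
  intro A₁ A₂ a₁ a₂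
  rw [RedSeq.models_ofCnf_iff, ← h, aduAssign_append]

theorem exists_fvDecomp_of_tSigma {lam : Ordinal} (h : TSigma (annotV τ) ℵ₀ lam φ) :
    ∃ D : RedSeq τ r₁ r₂,
      (∀ i, TSigma τ ℵ₀ lam (D.Δ₁ i) ∧ rank.{u} (D.Δ₁ i) ≤ rank.{u} φ) ∧
      (∀ i, TSigma τ ℵ₀ lam (D.Δ₂ i) ∧ rank.{u} (D.Δ₂ i) ≤ rank.{u} φ) ∧
      Finite D.I ∧ D.β.Finitary ∧ FVDecompADU φ D :=
  let ⟨_, θ, η, _, hθη, hφ⟩ := (hasDnf_of_tSigma_and_hasCnf_of_tPi φ lam _).1 h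
  ⟨.ofDnf θ η, fun j => (hθη j).1, fun j => (hθη j).2, ‹_›, RedSeq.finitary_ofDnf θ η,
    hφ.fvDecompADU⟩

theorem exists_fvDecomp_of_tPi {lam : Ordinal} (h : TPi (annotV τ) ℵ₀ lam φ) :
    ∃ D : RedSeq τ r₁ r₂,
      (∀ i, TPi τ ℵ₀ lam (D.Δ₁ i) ∧ rank.{u} (D.Δ₁ i) ≤ rank.{u} φ) ∧
      (∀ i, TPi τ ℵ₀ lam (D.Δ₂ i) ∧ rank.{u} (D.Δ₂ i) ≤ rank.{u} φ) ∧
      Finite D.I ∧ D.β.Finitary ∧ FVDecompADU φ D :=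
  let ⟨_, θ, η, _, hθη, hφ⟩ := (hasDnf_of_tSigma_and_hasCnf_of_tPi φ lam _).2 h
  ⟨.ofCnf θ η, fun j => (hθη j).1, fun j => (hθη j).2, ‹_›, RedSeq.finitary_ofCnf θ η,
    hφ.fvDecompADU⟩

end FefermanVaught

section Universes

-- `rank` and the levels of `TSigma`/`TPi` are universe polymorphic, and the main statement
-- uses an independent universe at each of their occurrences.

universe u v

variable {τ : Vocab} {q : ℕ}

theorem lift_rank (φ : Formula τ q) : Cardinal.lift.{v} (rank.{u} φ) = rank.{max u v} φ := by
  induction φ with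
  | iAnd I f ih =>
    simp only [rank]
    rw [Cardinal.lift_iSup Cardinal.bddAbove_of_small]
    exact iSup_congr ih
  | iOr I f ih =>
    simp only [rank]
    rw [Cardinal.lift_iSup Cardinal.bddAbove_of_small]
    exact iSup_congr ih
  | ex φ ih => simp only [rank, Cardinal.lift_add, Cardinal.lift_one, ih]
  | all φ ih => simp only [rank, Cardinal.lift_add, Cardinal.lift_one, ih]
  | _ => simp [rank]

theorem rank_le_natCast_iff_univ (φ : Formula τ q) (m : ℕ) :
    rank.{u} φ ≤ m ↔ rank.{v} φ ≤ m := by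
  rw [← Cardinal.lift_le.{v}, lift_rank, Cardinal.lift_natCast,
    ← Cardinal.lift_le.{u} (a := rank.{v} φ), lift_rank, Cardinal.lift_natCast]

theorem tSigma_tPi_of_lift_eq {κ : Cardinal} (φ : Formula τ q) {lam : Ordinal.{u}}
    {mu : Ordinal.{v}} (h : Ordinal.lift.{v} lam = Ordinal.lift.{u} mu) :
    (TSigma τ κ lam φ → TSigma τ κ mu φ) ∧ (TPi τ κ lam φ → TPi τ κ mu φ) := by
  have qf_case : ∀ {q} {φ : Formula τ q} {mu : Ordinal.{v}}, IsQF φ →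
      Ordinal.lift.{v} (0 : Ordinal.{u}) = Ordinal.lift.{u} mu →
      TSigma τ κ mu φ ∧ TPi τ κ mu φ := by
    intro q φ mu hφ h
    obtain rfl : mu = 0 :=
      Ordinal.lift_inj.1 (h.symm.trans (Ordinal.lift_zero.trans Ordinal.lift_zero.symm))
    exact ⟨.qf hφ, .qf hφ⟩
  induction φ generalizing lam mu with
  | iAnd I f ih =>
    refine ⟨fun hφ => ?_, fun hφ => ?_⟩
    · cases hφ with
      | qf hq => exact (qf_case hq h).1
      | conj _ _ hI lam' hlt hf =>
        choose mu' hmu' hlift using fun i => Ordinal.lt_lift_iff.1 (h ▸ Ordinal.lift_lt.2 (hlt i))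
        exact .conj I f hI mu' hmu' fun i => (ih i (hlift i).symm).2 (hf i)
    · cases hφ with
      | qf hq => exact (qf_case hq h).2
  | iOr I f ih =>
    refine ⟨fun hφ => ?_, fun hφ => ?_⟩
    · cases hφ with
      | qf hq => exact (qf_case hq h).1
    · cases hφ with
      | qf hq => exact (qf_case hq h).2
      | disj _ _ hI lam' hlt hf =>
        choose mu' hmu' hlift using fun i => Ordinal.lt_lift_iff.1 (h ▸ Ordinal.lift_lt.2 (hlt i))
        exact .disj I f hI mu' hmu' fun i => (ih i (hlift i).symm).1 (hf i)
  | ex ψ ih =>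
    refine ⟨fun hφ => ?_, fun hφ => ?_⟩
    · cases hφ with
      | qf hq => cases hq
      | ex hψ => exact .ex ((ih h).1 hψ)
    · cases hφ with
      | qf hq => cases hq
  | all ψ ih =>
    refine ⟨fun hφ => ?_, fun hφ => ?_⟩
    · cases hφ with
      | qf hq => cases hq
    · cases hφ with
      | qf hq => cases hq
      | all hψ => exact .all ((ih h).2 hψ)
  | _ =>
    exact ⟨fun hφ => by cases hφ with | qf hq => exact (qf_case hq h).1,
      fun hφ => by cases hφ with | qf hq => exact (qf_case hq h).2⟩

theorem TSigma.natCast_univ {κ : Cardinal} {φ : Formula τ q} {n : ℕ}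
    (h : TSigma τ κ (n : Ordinal.{u}) φ) : TSigma τ κ (n : Ordinal.{v}) φ :=
  (tSigma_tPi_of_lift_eq φ (by simp)).1 h

theorem TPi.natCast_univ {κ : Cardinal} {φ : Formula τ q} {n : ℕ}
    (h : TPi τ κ (n : Ordinal.{u}) φ) : TPi τ κ (n : Ordinal.{v}) φ :=
  (tSigma_tPi_of_lift_eq φ (by simp)).2 h

end Universes

/-- For n, m ≥ 0 and L one of tΣ_n[m] or tΠ_n[m] (= tΣ_{ω,n}[m], tΠ_{ω,n}[m]),
every L formula φ(x̄₁,x̄₂) over τ̱ has an L reduction sequence over τ (with finite sequences of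
formulae of the same class and a finitary propositional formula β) that is a Feferman–Vaught
decomposition of φ over the annotated disjoint union operation. -/
theorem stmt6 (τ : Vocab) [Fintype τ.Rel] (n m : ℕ) (r₁ r₂ : ℕ)
    (φ : Formula (annotV τ) (r₁ + r₂)) :
    (TSigma (annotV τ) ℵ₀ (n : Ordinal) φ → rank φ ≤ (m : Cardinal) →
      ∃ D : RedSeq τ r₁ r₂,
        (∀ i, TSigma τ ℵ₀ (n : Ordinal) (D.Δ₁ i) ∧ rank (D.Δ₁ i) ≤ (m : Cardinal)) ∧
        (∀ i, TSigma τ ℵ₀ (n : Ordinal) (D.Δ₂ i) ∧ rank (D.Δ₂ i) ≤ (m : Cardinal)) ∧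
        Finite D.I ∧ D.β.Finitary ∧ FVDecompADU φ D) ∧
    (TPi (annotV τ) ℵ₀ (n : Ordinal) φ → rank φ ≤ (m : Cardinal) →
      ∃ D : RedSeq τ r₁ r₂,
        (∀ i, TPi τ ℵ₀ (n : Ordinal) (D.Δ₁ i) ∧ rank (D.Δ₁ i) ≤ (m : Cardinal)) ∧
        (∀ i, TPi τ ℵ₀ (n : Ordinal) (D.Δ₂ i) ∧ rank (D.Δ₂ i) ≤ (m : Cardinal)) ∧
        Finite D.I ∧ D.β.Finitary ∧ FVDecompADU φ D) := by
  refine ⟨fun h hm => ?_, fun h hm => ?_⟩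
  · obtain ⟨D, h₁, h₂, hI, hβ, hD⟩ := exists_fvDecomp_of_tSigma h
    exact ⟨D,
      fun i => ⟨(h₁ i).1.natCast_univ, (rank_le_natCast_iff_univ _ m).1 ((h₁ i).2.trans hm)⟩,
      fun i => ⟨(h₂ i).1.natCast_univ, (rank_le_natCast_iff_univ _ m).1 ((h₂ i).2.trans hm)⟩,
      hI, hβ, hD⟩
  · obtain ⟨D, h₁, h₂, hI, hβ, hD⟩ := exists_fvDecomp_of_tPi h
    exact ⟨D,
      fun i => ⟨(h₁ i).1.natCast_univ, (rank_le_natCast_iff_univ _ m).1 ((h₁ i).2.trans hm)⟩,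
      fun i => ⟨(h₂ i).1.natCast_univ, (rank_le_natCast_iff_univ _ m).1 ((h₂ i).2.trans hm)⟩,
      hI, hβ, hD⟩

end FV
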